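/- Let W[1..m] be a sequence of m ≥ 1 binary strings of length ℓ ≥ 1, let π[1..m] be a permutation of [1..m] with inverse permutation π⁻¹ (so π[π⁻¹[i]] = i for all i), let T = PermSeqToString_ℓ(π,W), k = 1 + ⌊log₂ m⌋, and β = ℓ + k + 1. Then for every X ∈ {0,1}^{≤ℓ}, letting 𝒫 = { i ∈ [1..m] : X is a prefix of W[i] }, it holds Occ(rev(X)·4, T) = { π⁻¹[i]·β − (k + |X|) : i ∈ 𝒫 }. -/

import Mathlib

/-- Strict lexicographic order on strings: `U ≺ V` iff `U` is a proper prefix of `V`,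
or `U` and `V` first differ at a position where `U` has the smaller symbol. -/
def LexLt {α : Type*} [LT α] (U V : List α) : Prop := List.Lex (· < ·) U V

/-- Non-strict lexicographic order on strings. -/
def LexLe {α : Type*} [LT α] (U V : List α) : Prop := LexLt U V ∨ U = V

/-- The suffix `T[j..|T|]` of `T` (1-based index `j`). -/
def Suf {α : Type*} (T : List α) (j : ℕ) : List α := T.drop (j - 1)

/-- `Occ P T` is the set of starting positions (1-based) of occurrences of `P` in `T`. -/
def Occ {α : Type*} (P T : List α) : Set ℕ :=
  { j | 1 ≤ j ∧ j + P.length ≤ T.length + 1 ∧ (Suf T j).take P.length = P }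

/-- `RangeBeg P T` = number of suffixes of `T` lexicographically smaller than `P`. -/
noncomputable def RangeBeg {α : Type*} [LT α] (P T : List α) : ℕ :=
  { j | 1 ≤ j ∧ j ≤ T.length ∧ LexLt (Suf T j) P }.ncard

/-- `RangeEnd P T = RangeBeg P T + |Occ P T|`. -/
noncomputable def RangeEnd {α : Type*} [LT α] (P T : List α) : ℕ :=
  RangeBeg P T + (Occ P T).ncard

/-- `LexRange P₁ P₂ T` = positions `j ∈ [1..|T|]` with `P₁ ⪯ T[j..|T|] ≺ P₂`. -/
def LexRange {α : Type*} [LT α] (P₁ P₂ T : List α) : Set ℕ :=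
  { j | 1 ≤ j ∧ j ≤ T.length ∧ LexLe P₁ (Suf T j) ∧ LexLt (Suf T j) P₂ }

/-- `sa` is the suffix array of `T` (1-based): a permutation of `[1..|T|]` listing the
starting positions of the suffixes of `T` in increasing lexicographic order. -/
def IsSuffixArray {α : Type*} [LT α] (T : List α) (sa : ℕ → ℕ) : Prop :=
  (∀ i, 1 ≤ i → i ≤ T.length → 1 ≤ sa i ∧ sa i ≤ T.length) ∧
  (∀ j, 1 ≤ j → j ≤ T.length → ∃ i, 1 ≤ i ∧ i ≤ T.length ∧ sa i = j) ∧
  (∀ i j, 1 ≤ i → i < j → j ≤ T.length → LexLt (Suf T (sa i)) (Suf T (sa j)))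

/-- `binSym k x` : the length-`k` binary representation of `x` (MSB first, leading zeros). -/
def binSym (k x : ℕ) : List ℕ := (List.range k).map fun i => x / 2 ^ (k - 1 - i) % 2

/-- `binStr k S` = `bin_k(S[1]) · bin_k(S[2]) · … · bin_k(S[|S|])`. -/
def binStr (k : ℕ) (S : List ℕ) : List ℕ := (S.map (binSym k)).flatten

/-- `ebinSym k x = 1^{k+1} · 0 · bin_k(x) · 0`. -/
def ebinSym (k x : ℕ) : List ℕ := List.replicate (k + 1) 1 ++ [0] ++ binSym k x ++ [0]

/-- `ebinStr k S` = concatenation of `ebin_k(S[i])` for `i = 1, …, |S|`. -/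
def ebinStr (k : ℕ) (S : List ℕ) : List ℕ := (S.map (ebinSym k)).flatten

/-- `sEnc k i` : length-`k` base-2 representation of `i` with `0 ↦ 2` and `1 ↦ 3`. -/
def sEnc (k i : ℕ) : List ℕ := (binSym k i).map (· + 2)

/-- `SeqToString m W = ⊙_{i=1}^{m} rev(W[i]) · 4 · s(i-1)` with `k = 1 + ⌊log₂ m⌋`. -/
def SeqToString (m : ℕ) (W : ℕ → List ℕ) : List ℕ :=
  ((List.range m).map
    fun i => (W (i + 1)).reverse ++ [4] ++ sEnc (1 + Nat.log 2 m) i).flatten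

/-- `PermSeqToString m π W = ⊙_{i=1}^{m} rev(W[π[i]]) · 4 · s(π[i]-1)`. -/
def PermSeqToString (m : ℕ) (perm : ℕ → ℕ) (W : ℕ → List ℕ) : List ℕ :=
  ((List.range m).map
    fun i => (W (perm (i + 1))).reverse ++ [4]
      ++ sEnc (1 + Nat.log 2 m) (perm (i + 1) - 1)).flatten

/-- `PrefixRank W j X = |{ i ∈ [1..j] : X is a prefix of W[i] }|`. -/
noncomputable def PrefixRank {α : Type*} (W : ℕ → List α) (j : ℕ) (X : List α) : ℕ :=
  { i | 1 ≤ i ∧ i ≤ j ∧ X <+: W i }.ncard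

/-- `p` is the `r`-th smallest element of the set `A ⊆ ℕ`. -/
def IsKthSmallest (A : Set ℕ) (r p : ℕ) : Prop :=
  p ∈ A ∧ (A ∩ Set.Iic p).ncard = r

/-- Ceiling division `⌈a / b⌉` of positive naturals. -/
def cdiv (a b : ℕ) : ℕ := (a + b - 1) / b

/-- Alphabet inversion: `inv_σ(S)[i] = σ - 1 - S[i]`. -/
def invStr (σ : ℕ) (S : List ℕ) : List ℕ := S.map fun a => σ - 1 - a

/-- `p` is a period of `S`: `1 ≤ p ≤ |S|` and `S[i] = S[i+p]` for all `i ∈ [1..|S|-p]`. -/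
def IsPeriod {α : Type*} (S : List α) (p : ℕ) : Prop :=
  1 ≤ p ∧ p ≤ S.length ∧ S.drop p <+: S

/-- `per S`: the smallest period of `S`. -/
noncomputable def per {α : Type*} (S : List α) : ℕ := sInf { p | IsPeriod S p }

/-- `P` is `τ`-periodic: `|P| ≥ 3τ - 1` and `per(P[1..3τ-1]) ≤ τ/3`. -/
noncomputable def TauPeriodic {α : Type*} (τ : ℕ) (P : List α) : Prop :=
  3 * τ ≤ P.length + 1 ∧ 3 * per (P.take (3 * τ - 1)) ≤ τ

/-- `R(τ,T) = { i ∈ [1..n-3τ+2] : per(T[i..i+3τ-2]) ≤ τ/3 }`. -/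
noncomputable def Rset {α : Type*} (τ : ℕ) (T : List α) : Set ℕ :=
  { i | 1 ≤ i ∧ i + 3 * τ ≤ T.length + 2 ∧ 3 * per ((Suf T i).take (3 * τ - 1)) ≤ τ }

/-- `S` is a `τ`-synchronizing set of `T` (consistency and density conditions). -/
noncomputable def IsSyncSet {α : Type*} (τ : ℕ) (T : List α) (S : Set ℕ) : Prop :=
  (∀ j ∈ S, 1 ≤ j ∧ j + 2 * τ ≤ T.length + 1) ∧
  (∀ i j, 1 ≤ i → i + 2 * τ ≤ T.length + 1 → 1 ≤ j → j + 2 * τ ≤ T.length + 1 →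
    (Suf T i).take (2 * τ) = (Suf T j).take (2 * τ) → (i ∈ S ↔ j ∈ S)) ∧
  (∀ i, 1 ≤ i → i + 3 * τ ≤ T.length + 2 → (S ∩ Set.Ico i (i + τ) = ∅ ↔ i ∈ Rset τ T))

/-- `succ_S(x) = min { x' ∈ S : x' ≥ x }`. -/
noncomputable def succS (S : Set ℕ) (x : ℕ) : ℕ := sInf (S ∩ Set.Ici x)

/-- `DistPrefixes(τ,T,S) = { T[j..succ_S(j)+2τ) : j ∈ [1..n-3τ+2] \ R(τ,T) }`. -/
noncomputable def DistPrefixes {α : Type*} (τ : ℕ) (T : List α) (S : Set ℕ) : Set (List α) :=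
  (fun j => (Suf T j).take (succS S j + 2 * τ - j)) ''
    { j | 1 ≤ j ∧ j + 3 * τ ≤ T.length + 2 ∧ j ∉ Rset τ T }

/-- `r` is the value of the prefix RMQ: the smallest index `i ∈ (b..e]` with `X` a prefix of
`W[i]` minimizing `A[i]` (ties broken towards the smaller index). -/
def IsPrefixRMQ (A : ℕ → ℤ) (W : ℕ → List ℕ) (b e : ℕ) (X : List ℕ) (r : ℕ) : Prop :=
  (b < r ∧ r ≤ e ∧ X <+: W r) ∧
  (∀ i, b < i → i ≤ e → X <+: W i → A r ≤ A i) ∧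
  (∀ i, b < i → i ≤ e → X <+: W i → A i = A r → r ≤ i)

/-! Every block `rev(W[π[t]]) · 4 · s(π[t] - 1)` of `T` has length `β` and contains the symbol `4`
exactly once, at offset `ℓ`, because `W` is binary and `s` only uses `2` and `3`. Hence the final `4`
of an occurrence of `rev(X) · 4` sits on a block separator, and the occurrence then reads the last
`|X|` symbols of `rev(W[π[t]])`, which equal `rev(X)` iff `X` is a prefix of `W[π[t]]`. -/

theorem length_sEnc (k i : ℕ) : (sEnc k i).length = k := by
  simp [sEnc, binSym]

theorem le_three_of_mem_sEnc {k i a : ℕ} (h : a ∈ sEnc k i) : a ≤ 3 := by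
  simp only [sEnc, binSym, List.mem_map, List.mem_range] at h
  obtain ⟨b, ⟨j, -, rfl⟩, rfl⟩ := h
  omega

namespace List

variable {α : Type*} {F : ℕ → List α} {m β : ℕ}

theorem length_flatten_map_range (hF : ∀ t < m, (F t).length = β) :
    ((range m).map F).flatten.length = m * β := by
  induction m with
  | zero => simp
  | succ m ih =>
    rw [range_succ, map_append, flatten_append, length_append, ih fun t ht => hF t (by omega)]
    simp [hF m (by omega), Nat.succ_mul]

theorem drop_mul_flatten_map_range (hF : ∀ t < m, (F t).length = β) {t : ℕ} (ht : t < m) :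
    ((range m).map F).flatten.drop (t * β) =
      F t ++ ((range (m - (t + 1))).map fun i => F (t + 1 + i)).flatten := by
  obtain ⟨d, rfl⟩ : ∃ d, m = t + 1 + d := ⟨m - (t + 1), by omega⟩
  have hprefix : ((range t).map F).flatten.length = t * β :=
    length_flatten_map_range fun i hi => hF i (by omega)
  rw [range_add, map_append, flatten_append, range_succ, map_append, flatten_append,
    append_assoc, ← hprefix, drop_left, map_map, Nat.add_sub_cancel_left]
  simp [Function.comp_def]

theorem getElem?_flatten_map_range (hF : ∀ t < m, (F t).length = β) {t r : ℕ} (ht : t < m)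
    (hr : r < β) : ((range m).map F).flatten[t * β + r]? = (F t)[r]? := by
  rw [← getElem?_drop, drop_mul_flatten_map_range hF ht,
    getElem?_append_left (by rw [hF t ht]; exact hr)]

end List

section Separator

variable {α : Type*} {A B : ℕ → List α} {c : α} {m a b : ℕ}

theorem eq_length_of_getElem?_eq_separator {U V : List α} {r : ℕ} (hU : c ∉ U) (hV : c ∉ V)
    (h : (U ++ [c] ++ V)[r]? = some c) : r = U.length := by
  rcases lt_trichotomy r U.length with hr | hr | hr
  · rw [List.append_assoc, List.getElem?_append_left hr] at h
    exact absurd (List.mem_of_getElem? h) hU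
  · exact hr
  · rw [List.getElem?_append_right (by rw [List.length_append, List.length_singleton]; omega)] at h
    exact absurd (List.mem_of_getElem? h) hV

variable (hA : ∀ t < m, (A t).length = a) (hB : ∀ t < m, (B t).length = b)
include hA hB

theorem length_separated_block (t : ℕ) (ht : t < m) : (A t ++ [c] ++ B t).length = a + b + 1 := by
  simp only [List.length_append, List.length_singleton, hA t ht, hB t ht]
  omega

theorem take_drop_flatten_separator {t n : ℕ} (ht : t < m) (hn : n ≤ a) :
    (((List.range m).map fun t => A t ++ [c] ++ B t).flatten.drop
        (t * (a + b + 1) + (a - n))).take (n + 1) = (A t).drop (a - n) ++ [c] := by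
  have hlen : ((A t).drop (a - n)).length = n := by
    rw [List.length_drop, hA t ht]
    omega
  rw [← List.drop_drop, List.drop_mul_flatten_map_range (length_separated_block hA hB) ht,
    List.append_assoc, List.append_assoc,
    List.drop_append_of_le_length (by rw [hA t ht]; omega), List.take_append,
    List.take_of_length_le (by omega), hlen, Nat.add_sub_cancel_left]
  rfl

theorem mem_occ_append_separator_iff (hcA : ∀ t < m, c ∉ A t) (hcB : ∀ t < m, c ∉ B t)
    {P : List α} (hP : P.length ≤ a) (j : ℕ) :
    j ∈ Occ (P ++ [c]) ((List.range m).map fun t => A t ++ [c] ++ B t).flatten ↔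
      ∃ t < m, P <:+ A t ∧ j = t * (a + b + 1) + (a - P.length) + 1 := by
  have hF := length_separated_block (c := c) hA hB
  have hT := List.length_flatten_map_range hF
  simp only [Occ, Suf, Set.mem_ofPred_eq, List.length_append, List.length_singleton]
  constructor
  · rintro ⟨hj, hjT, hocc⟩
    obtain ⟨t, r, hr, hpos⟩ : ∃ t r, r < a + b + 1 ∧ j - 1 + P.length = t * (a + b + 1) + r :=
      ⟨_, _, Nat.mod_lt _ (by omega), (Nat.div_add_mod' _ _).symm⟩
    have ht : t < m := by
      by_contra! h
      have := Nat.mul_le_mul_right (a + b + 1) h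
      omega
    have hsep : r = a := by
      have hc : ((List.range m).map fun t => A t ++ [c] ++ B t).flatten[j - 1 + P.length]?
          = some c := by
        rw [← List.getElem?_drop, ← List.getElem?_take_of_lt (Nat.lt_succ_self _), hocc,
          List.getElem?_append_right le_rfl, Nat.sub_self]
        rfl
      rw [hpos, List.getElem?_flatten_map_range hF ht hr] at hc
      rw [eq_length_of_getElem?_eq_separator (hcA t ht) (hcB t ht) hc, hA t ht]
    have hj1 : j - 1 = t * (a + b + 1) + (a - P.length) := by omega
    rw [hj1, take_drop_flatten_separator hA hB ht hP] at hocc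
    refine ⟨t, ht, ?_, by omega⟩
    rw [List.suffix_iff_eq_drop, hA t ht, List.append_cancel_right hocc]
  · rintro ⟨t, ht, hsuf, rfl⟩
    have hmul := Nat.mul_le_mul_right (a + b + 1) (Nat.succ_le_of_lt ht)
    refine ⟨by omega, by rw [Nat.succ_mul] at hmul; omega, ?_⟩
    rw [Nat.add_sub_cancel, take_drop_flatten_separator hA hB ht hP, ← hA t ht,
      ← List.suffix_iff_eq_drop.mp hsuf]

end Separator

theorem succ_mul_sub_eq {n ℓ : ℕ} (hn : n ≤ ℓ) (t k : ℕ) :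
    (t + 1) * (ℓ + k + 1) - (k + n) = t * (ℓ + k + 1) + (ℓ - n) + 1 := by
  rw [Nat.succ_mul]
  omega

theorem stmt13_general (m ℓ : ℕ) (W : ℕ → List ℕ)
    (hWlen : ∀ i, 1 ≤ i → i ≤ m → (W i).length = ℓ)
    (hWbin : ∀ i, 1 ≤ i → i ≤ m → ∀ a ∈ W i, a < 2)
    (perm permInv : ℕ → ℕ)
    (hperm : ∀ i, 1 ≤ i → i ≤ m → 1 ≤ perm i ∧ perm i ≤ m)
    (hpermInv : ∀ i, 1 ≤ i → i ≤ m →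
      1 ≤ permInv i ∧ permInv i ≤ m ∧ perm (permInv i) = i)
    (hInvPerm : ∀ i, 1 ≤ i → i ≤ m → permInv (perm i) = i)
    (X : List ℕ) (hXlen : X.length ≤ ℓ) :
    Occ (X.reverse ++ [4]) (PermSeqToString m perm W) =
      (fun i => permInv i * (ℓ + (1 + Nat.log 2 m) + 1) - ((1 + Nat.log 2 m) + X.length)) ''
        { i | 1 ≤ i ∧ i ≤ m ∧ X <+: W i } := by
  have hperm' : ∀ t < m, 1 ≤ perm (t + 1) ∧ perm (t + 1) ≤ m := fun t ht =>
    hperm (t + 1) (by omega) (by omega)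
  have hA : ∀ t < m, (W (perm (t + 1))).reverse.length = ℓ := fun t ht => by
    rw [List.length_reverse, hWlen _ (hperm' t ht).1 (hperm' t ht).2]
  have hcA : ∀ t < m, 4 ∉ (W (perm (t + 1))).reverse := fun t ht h4 => by
    have := hWbin _ (hperm' t ht).1 (hperm' t ht).2 4 (List.mem_reverse.mp h4)
    omega
  have hcB : ∀ t < m, 4 ∉ sEnc (1 + Nat.log 2 m) (perm (t + 1) - 1) := fun _ _ h4 => by
    have := le_three_of_mem_sEnc h4
    omega
  ext j
  refine (mem_occ_append_separator_iff hA (fun _ _ => length_sEnc _ _) hcA hcB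
    (by rwa [List.length_reverse]) j).trans ?_
  simp only [List.reverse_suffix, List.length_reverse, Set.mem_image, Set.mem_ofPred_eq]
  constructor
  · rintro ⟨t, ht, hpre, rfl⟩
    refine ⟨perm (t + 1), ⟨(hperm' t ht).1, (hperm' t ht).2, hpre⟩, ?_⟩
    rw [hInvPerm _ (by omega) (by omega), succ_mul_sub_eq hXlen]
  · rintro ⟨i, ⟨hi1, him, hpre⟩, rfl⟩
    obtain ⟨hinv1, hinvm, hperminv⟩ := hpermInv i hi1 him
    refine ⟨permInv i - 1, by omega, by rwa [Nat.sub_add_cancel hinv1, hperminv], ?_⟩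
    rw [← succ_mul_sub_eq hXlen, Nat.sub_add_cancel hinv1]

theorem stmt13 (m ℓ : ℕ) (hm : 1 ≤ m) (hℓ : 1 ≤ ℓ) (W : ℕ → List ℕ)
    (hWlen : ∀ i, 1 ≤ i → i ≤ m → (W i).length = ℓ)
    (hWbin : ∀ i, 1 ≤ i → i ≤ m → ∀ a ∈ W i, a < 2)
    (perm permInv : ℕ → ℕ)
    (hperm : ∀ i, 1 ≤ i → i ≤ m → 1 ≤ perm i ∧ perm i ≤ m)
    (hpermInv : ∀ i, 1 ≤ i → i ≤ m →
      1 ≤ permInv i ∧ permInv i ≤ m ∧ perm (permInv i) = i)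
    (hInvPerm : ∀ i, 1 ≤ i → i ≤ m → permInv (perm i) = i)
    (X : List ℕ) (hXlen : X.length ≤ ℓ) (hXbin : ∀ a ∈ X, a < 2) :
    Occ (X.reverse ++ [4]) (PermSeqToString m perm W) =
      (fun i => permInv i * (ℓ + (1 + Nat.log 2 m) + 1) - ((1 + Nat.log 2 m) + X.length)) ''
        { i | 1 ≤ i ∧ i ≤ m ∧ X <+: W i } :=
  stmt13_general m ℓ W hWlen hWbin perm permInv hperm hpermInv hInvPerm X hXlen
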